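/- For any 2×2 matrix A over the Hamilton quaternions, ddet A = 0 if and only if the rows of A are left linearly dependent over ℍ (equivalently, the columns are right linearly dependent), where ddet A = rdet₁(A*A). -/

import Mathlib

noncomputable def rdet1 (B : Matrix (Fin 2) (Fin 2) (Quaternion ℝ)) : Quaternion ℝ :=
  B 0 0 * B 1 1 - B 0 1 * B 1 0

noncomputable def ddet (A : Matrix (Fin 2) (Fin 2) (Quaternion ℝ)) : Quaternion ℝ :=
  rdet1 (A.conjTranspose * A)

/-!
`Aᴴ * A` is the Gram matrix of the columns `u, v` of `A` for the form `⟨u, v⟩ = ∑ i, star uᵢ * vᵢ`,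
so `ddet A` is the real number `‖u‖² ‖v‖² - |⟨u, v⟩|²`. The quaternionic Lagrange identity
`∑ i, |‖u‖² vᵢ - uᵢ ⟨u, v⟩|² = ‖u‖² ddet A` shows that it vanishes exactly when `u = 0` or `v` is a
right multiple of `u`, i.e. when the columns are right dependent.

A square matrix over a division ring with a nonzero `d` such that `A *ᵥ d = 0` also has a nonzero
`c` such that `c ᵥ* A = 0`: otherwise `c ↦ c ᵥ* A` would be injective, hence surjective, while its
image is annihilated by `d`. Applied to `Aᴴ`, this gives the converse.
-/

open Quaternion Matrix

section DivisionRing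

variable {K n : Type*} [DivisionRing K] [Fintype n] [DecidableEq n]

theorem exists_vecMul_eq_zero_of_mulVec_eq_zero {A : Matrix n n K} {d : n → K} (hd : d ≠ 0)
    (hAd : A *ᵥ d = 0) : ∃ c ≠ 0, c ᵥ* A = 0 := by
  obtain ⟨k, hk⟩ := Function.ne_iff.mp hd
  have hnotsurj : ¬Function.Surjective A.vecMulLinear := fun hsurj => by
    obtain ⟨c, hc⟩ := hsurj (Pi.single k 1)
    have := dotProduct_mulVec c A d
    rw [hAd, dotProduct_zero, ← vecMulLinear_apply, hc, single_dotProduct, one_mul] at this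
    exact hk this.symm
  rw [← LinearMap.injective_iff_surjective, injective_iff_map_eq_zero] at hnotsurj
  push Not at hnotsurj
  obtain ⟨c, hcA, hc⟩ := hnotsurj
  exact ⟨c, hc, hcA⟩

theorem exists_vecMul_eq_zero_iff_exists_mulVec_eq_zero [StarRing K] (A : Matrix n n K) :
    (∃ c ≠ 0, c ᵥ* A = 0) ↔ ∃ d ≠ 0, A *ᵥ d = 0 := by
  refine ⟨fun ⟨c, hc, hcA⟩ => ?_,
    fun ⟨d, hd, hAd⟩ => exists_vecMul_eq_zero_of_mulVec_eq_zero hd hAd⟩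
  have hAc : Aᴴ *ᵥ star c = 0 := by rw [← star_vecMul, hcA, star_zero]
  obtain ⟨d, hd, hdA⟩ := exists_vecMul_eq_zero_of_mulVec_eq_zero (star_ne_zero.mpr hc) hAc
  refine ⟨star d, star_ne_zero.mpr hd, ?_⟩
  rw [← conjTranspose_conjTranspose A, ← star_vecMul, hdA, star_zero]

end DivisionRing

@[simp, norm_cast]
theorem Quaternion.coe_sum {α : Type*} (s : Finset α) (f : α → ℝ) :
    ((∑ a ∈ s, f a : ℝ) : ℍ[ℝ]) = ∑ a ∈ s, (f a : ℍ[ℝ]) :=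
  map_sum (algebraMap ℝ ℍ[ℝ]) f s

section Gram

variable {ι : Type*} [Fintype ι]

theorem star_dotProduct_self (u : ι → ℍ[ℝ]) : star u ⬝ᵥ u = ↑(∑ i, normSq (u i)) := by
  simp [dotProduct, star_mul_self]

noncomputable def gramDet (u v : ι → ℍ[ℝ]) : ℝ :=
  (∑ i, normSq (u i)) * (∑ i, normSq (v i)) - normSq (star u ⬝ᵥ v)

theorem gramDet_comm (u v : ι → ℍ[ℝ]) : gramDet u v = gramDet v u := by
  rw [gramDet, gramDet, star_dotProduct, normSq_star, mul_comm]

theorem gramDet_mul_right (u : ι → ℍ[ℝ]) (r : ℍ[ℝ]) : gramDet u (fun i => u i * r) = 0 := by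
  have hdot : star u ⬝ᵥ (fun i => u i * r) = ↑(∑ i, normSq (u i)) * r := by
    rw [← star_dotProduct_self, dotProduct, dotProduct, Finset.sum_mul]
    simp only [mul_assoc]
  simp only [gramDet, hdot, normSq.map_mul, normSq_coe, ← Finset.sum_mul]
  ring

theorem sum_normSq_mul_sub_mul_dotProduct (u v : ι → ℍ[ℝ]) :
    ∑ i, normSq (((∑ j, normSq (u j) : ℝ) : ℍ[ℝ]) * v i - u i * (star u ⬝ᵥ v))
      = (∑ j, normSq (u j)) * gramDet u v := by
  set s := ∑ j, normSq (u j)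
  set t := ∑ j, normSq (v j)
  set p := star u ⬝ᵥ v
  have hterm : ∀ i, star ((s : ℍ[ℝ]) * v i - u i * p) * ((s : ℍ[ℝ]) * v i - u i * p) =
      ((s * s : ℝ) : ℍ[ℝ]) * (star (v i) * v i) - (s : ℍ[ℝ]) * ((star (v i) * u i) * p)
        - (s : ℍ[ℝ]) * (star p * (star (u i) * v i)) + star p * (star (u i) * u i) * p := by
    intro i
    ext <;> simp <;> ring
  apply coe_injective
  calc ((∑ i, normSq ((s : ℍ[ℝ]) * v i - u i * p) : ℝ) : ℍ[ℝ])
      = ∑ i, star ((s : ℍ[ℝ]) * v i - u i * p) * ((s : ℍ[ℝ]) * v i - u i * p) := by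
        simp only [coe_sum, star_mul_self]
    _ = ((s * s : ℝ) : ℍ[ℝ]) * (star v ⬝ᵥ v) - (s : ℍ[ℝ]) * ((star v ⬝ᵥ u) * p)
        - (s : ℍ[ℝ]) * (star p * p) + star p * (star u ⬝ᵥ u) * p := by
        simp only [hterm, Finset.sum_add_distrib, Finset.sum_sub_distrib, ← Finset.mul_sum,
          ← Finset.sum_mul]
        rfl
    _ = ((s * (s * t - normSq p) : ℝ) : ℍ[ℝ]) := by
        rw [star_dotProduct_self, star_dotProduct_self, star_dotProduct, star_mul_self,
          ← coe_commutes _ (star p), mul_assoc _ (star p) p, star_mul_self]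
        norm_cast
        congr 1
        simp only [s, t, p]
        ring

theorem gramDet_eq_zero_iff (u v : ι → ℍ[ℝ]) :
    gramDet u v = 0 ↔ ∃ d₁ d₂ : ℍ[ℝ], (d₁ ≠ 0 ∨ d₂ ≠ 0) ∧ ∀ i, u i * d₁ + v i * d₂ = 0 := by
  constructor
  · intro h
    by_cases hs : ∑ j, normSq (u j) = 0
    · have hu : ∀ i, u i = 0 := fun i => normSq_eq_zero.mp <|
        (Finset.sum_eq_zero_iff_of_nonneg fun j _ => normSq_nonneg).mp hs i (Finset.mem_univ i)
      exact ⟨1, 0, Or.inl one_ne_zero, fun i => by simp [hu i]⟩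
    · have hw := sum_normSq_mul_sub_mul_dotProduct u v
      rw [h, mul_zero, Finset.sum_eq_zero_iff_of_nonneg fun j _ => normSq_nonneg] at hw
      have hs' : ((∑ j, normSq (u j) : ℝ) : ℍ[ℝ]) ≠ 0 := (coe_injective.ne_iff' coe_zero).mpr hs
      refine ⟨-(star u ⬝ᵥ v), _, Or.inr hs', fun i => ?_⟩
      rw [← coe_commutes, mul_neg, ← sub_eq_neg_add, ← normSq_eq_zero]
      exact hw i (Finset.mem_univ i)
  · rintro ⟨d₁, d₂, hd, h⟩
    wlog hd₂ : d₂ ≠ 0 generalizing u v d₁ d₂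
    · rw [gramDet_comm]
      exact this v u d₂ d₁ hd.symm (fun i => by rw [add_comm, h]) (hd.resolve_right hd₂)
    have hv : v = fun i => u i * -(d₁ * d₂⁻¹) := funext fun i => by
      rw [mul_neg, ← mul_assoc, ← neg_mul, eq_mul_inv_iff_mul_eq₀ hd₂, eq_neg_iff_add_eq_zero,
        add_comm, h i]
    rw [hv, gramDet_mul_right]

end Gram

theorem ddet_eq_gramDet (A : Matrix (Fin 2) (Fin 2) ℍ[ℝ]) :
    ddet A = gramDet (fun i => A i 0) (fun i => A i 1) := by
  have hentry : ∀ i j, (Aᴴ * A) i j = star (fun k => A k i) ⬝ᵥ fun k => A k j := fun _ _ => rfl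
  rw [ddet, rdet1, hentry, hentry, hentry, hentry, star_dotProduct_self, star_dotProduct_self,
    star_dotProduct (fun k => A k 1), self_mul_star, gramDet]
  norm_cast

theorem exists_ne_zero_fin_two_iff {α : Type*} [Zero α] (P : (Fin 2 → α) → Prop) :
    (∃ d ≠ 0, P d) ↔ ∃ d₁ d₂ : α, (d₁ ≠ 0 ∨ d₂ ≠ 0) ∧ P ![d₁, d₂] := by
  have hne : ∀ d : Fin 2 → α, d ≠ 0 ↔ d 0 ≠ 0 ∨ d 1 ≠ 0 := fun d => by
    rw [Function.ne_iff, Fin.exists_fin_two, Pi.zero_apply, Pi.zero_apply]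
  refine ⟨fun ⟨d, hd, hP⟩ => ⟨d 0, d 1, (hne d).mp hd, ?_⟩,
    fun ⟨d₁, d₂, hd, hP⟩ => ⟨![d₁, d₂], (hne _).mpr hd, hP⟩⟩
  rwa [show ![d 0, d 1] = d from List.ofFn_inj.mp rfl]

theorem ddet_eq_zero_iff_dependent (A : Matrix (Fin 2) (Fin 2) (Quaternion ℝ)) :
    (ddet A = 0 ↔
      ∃ c₁ c₂ : Quaternion ℝ, (c₁ ≠ 0 ∨ c₂ ≠ 0) ∧
        (∀ j, c₁ * A 0 j + c₂ * A 1 j = 0)) ∧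
    (ddet A = 0 ↔
      ∃ d₁ d₂ : Quaternion ℝ, (d₁ ≠ 0 ∨ d₂ ≠ 0) ∧
        (∀ i, A i 0 * d₁ + A i 1 * d₂ = 0)) := by
  have hcols :
      ddet A = 0 ↔ ∃ d₁ d₂ : ℍ[ℝ], (d₁ ≠ 0 ∨ d₂ ≠ 0) ∧ ∀ i, A i 0 * d₁ + A i 1 * d₂ = 0 := by
    rw [ddet_eq_gramDet, coe_injective.eq_iff' coe_zero, gramDet_eq_zero_iff]
  refine ⟨hcols.trans ?_, hcols⟩
  have hrows := exists_vecMul_eq_zero_iff_exists_mulVec_eq_zero A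
  simp only [exists_ne_zero_fin_two_iff, funext_iff, vecMul, mulVec, vec2_dotProduct,
    cons_val_zero, cons_val_one, Pi.zero_apply] at hrows
  exact hrows.symm
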